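/- arXiv:1811.10383 — 6 statements merged into one kernel-verified Lean document; each statement's English description precedes it below -/
import Mathlib

section
/- Let X be a proper geodesic metric space, c a geodesic ray in X, and b : X → ℝ its Busemann function (i.e., for every x ∈ X, d(x, c(t)) − t → b(x) as t → ∞). If x ∈ X and λ ∈ ℝ satisfy b(x) ≥ λ, then there exists p ∈ X with b(p) = λ and b(x) = λ + d(x,p). -/
/-- A *geodesic segment* from `x` to `y` is an isometric embedding
`γ : [0, dist x y] → X` with `γ 0 = x` and `γ (dist x y) = y`. -/
def IsGeodesicSegment {X : Type*} [MetricSpace X] (γ : ℝ → X) (x y : X) : Prop :=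
  γ 0 = x ∧ γ (dist x y) = y ∧
    ∀ s ∈ Set.Icc (0 : ℝ) (dist x y), ∀ t ∈ Set.Icc (0 : ℝ) (dist x y),
      dist (γ s) (γ t) = |s - t|

/-- A metric space is *geodesic* if every pair of points is joined by a geodesic segment. -/
def IsGeodesicSpace (X : Type*) [MetricSpace X] : Prop :=
  ∀ x y : X, ∃ γ : ℝ → X, IsGeodesicSegment γ x y

/-- A *geodesic ray* in a metric space. -/
def IsGeodesicRay {X : Type*} [MetricSpace X] (c : ℝ → X) : Prop :=
  ∀ s t : ℝ, 0 ≤ s → 0 ≤ t → dist (c s) (c t) = |s - t|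

/-- values of a Busemann function above `lam` are realized as `lam` plus the
distance to a point of the `lam`-level set. -/
theorem busemann_level_realized {X : Type*} [MetricSpace X] [ProperSpace X]
    (hX : IsGeodesicSpace X) (c : ℝ → X) (hc : IsGeodesicRay c) (b : X → ℝ)
    (hb : ∀ x : X, Filter.Tendsto (fun t : ℝ => dist x (c t) - t) Filter.atTop (nhds (b x)))
    (x : X) (lam : ℝ) (hx : lam ≤ b x) :
    ∃ p : X, b p = lam ∧ b x = lam + dist x p := by
  -- b is 1-Lipschitz
  have hb_lip : ∀ y z : X, b y ≤ b z + dist y z := by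
    intro y z
    refine le_of_tendsto_of_tendsto' (hb y) (((hb z).add_const (dist y z))) ?_
    intro t
    have := dist_triangle y z (c t)
    have : dist y (c t) ≤ dist z (c t) + dist y z := by
      calc dist y (c t) ≤ dist y z + dist z (c t) := dist_triangle y z (c t)
        _ = dist z (c t) + dist y z := by ring
    linarith
  set r : ℝ := b x - lam with hr_def
  have hr : 0 ≤ r := by simp [hr_def]; linarith
  set s : ℕ → ℝ := fun n => (n : ℝ) + (r + dist x (c 0)) with hs_def
  have hs_nonneg : ∀ n, 0 ≤ s n := by
    intro n
    have : (0:ℝ) ≤ (n:ℝ) := Nat.cast_nonneg n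
    have := dist_nonneg (x := x) (y := c 0)
    simp only [hs_def]; linarith
  have hdist_ge : ∀ n : ℕ, r ≤ dist x (c (s n)) := by
    intro n
    have h1 : dist (c 0) (c (s n)) = s n := by
      rw [hc 0 (s n) le_rfl (hs_nonneg n)]
      rw [abs_of_nonpos (by linarith [hs_nonneg n])]
      ring
    have h2 : dist (c 0) (c (s n)) ≤ dist (c 0) x + dist x (c (s n)) :=
      dist_triangle _ _ _
    have h3 : dist (c 0) x = dist x (c 0) := dist_comm _ _
    have : (0:ℝ) ≤ (n:ℝ) := Nat.cast_nonneg n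
    simp only [hs_def] at h1 ⊢
    linarith
  -- choose geodesics and points
  have hgeo : ∀ n : ℕ, ∃ p : X, dist x p = r ∧ dist p (c (s n)) = dist x (c (s n)) - r := by
    intro n
    obtain ⟨γ, h0, hD, hiso⟩ := hX x (c (s n))
    set D := dist x (c (s n)) with hD_def
    have hrD : r ≤ D := hdist_ge n
    have hm0 : (0:ℝ) ∈ Set.Icc (0:ℝ) D := ⟨le_rfl, dist_nonneg⟩
    have hmr : r ∈ Set.Icc (0:ℝ) D := ⟨hr, hrD⟩
    have hmD : D ∈ Set.Icc (0:ℝ) D := ⟨dist_nonneg, le_rfl⟩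
    refine ⟨γ r, ?_, ?_⟩
    · have := hiso 0 hm0 r hmr
      rw [h0] at this
      rw [this, abs_of_nonpos (by linarith)]; ring
    · have := hiso r hmr D hmD
      rw [hD] at this
      rw [this, abs_of_nonpos (by linarith)]; ring
  choose p hp1 hp2 using hgeo
  -- upper bound on b (p n)
  have hb_upper : ∀ n : ℕ, b (p n) ≤ dist x (c (s n)) - s n - r := by
    intro n
    have : b (p n) ≤ dist (p n) (c (s n)) - s n := by
      refine le_of_tendsto (hb (p n)) ?_
      filter_upwards [Filter.eventually_ge_atTop (s n)] with u hu
      have h1 : dist (p n) (c u) ≤ dist (p n) (c (s n)) + dist (c (s n)) (c u) :=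
        dist_triangle _ _ _
      have h2 : dist (c (s n)) (c u) = u - s n := by
        rw [hc (s n) u (hs_nonneg n) (le_trans (hs_nonneg n) hu)]
        rw [abs_of_nonpos (by linarith)]; ring
      linarith
    rw [hp2 n] at this
    linarith
  -- lower bound
  have hb_lower : ∀ n : ℕ, lam ≤ b (p n) := by
    intro n
    have := hb_lip x (p n)
    rw [hp1 n] at this
    simp only [hr_def] at *
    linarith
  -- compactness
  have hmem : ∀ n, p n ∈ Metric.closedBall x r := by
    intro n
    rw [Metric.mem_closedBall, dist_comm, hp1 n]
  obtain ⟨q, hqmem, φ, hφ, hφ_tendsto⟩ :=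
    (isCompact_closedBall x r).tendsto_subseq hmem
  -- b is continuous
  have hb_cont : Continuous b := by
    have : LipschitzWith 1 b := by
      intro y z
      rw [edist_dist, edist_dist, ENNReal.coe_one, one_mul]
      rw [ENNReal.ofReal_le_ofReal_iff dist_nonneg]
      rw [Real.dist_eq, abs_sub_le_iff]
      constructor
      · have := hb_lip y z; linarith
      · have := hb_lip z y; rw [dist_comm] at this; linarith
    exact this.continuous
  have hbq_tendsto : Filter.Tendsto (fun n => b (p (φ n))) Filter.atTop (nhds (b q)) :=
    ((hb_cont.tendsto q).comp hφ_tendsto)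
  -- s (φ n) → atTop
  have hsφ : Filter.Tendsto (fun n => s (φ n)) Filter.atTop Filter.atTop := by
    simp only [hs_def]
    apply Filter.tendsto_atTop_add_const_right
    exact tendsto_natCast_atTop_atTop.comp hφ.tendsto_atTop
  have hlim_upper : Filter.Tendsto (fun n => dist x (c (s (φ n))) - s (φ n) - r)
      Filter.atTop (nhds (b x - r)) :=
    ((hb x).comp hsφ).sub_const r
  have hbq_le : b q ≤ lam := by
    have h := le_of_tendsto_of_tendsto' hbq_tendsto hlim_upper
      (fun n => hb_upper (φ n))
    simp only [hr_def] at h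
    linarith
  have hbq_ge : lam ≤ b q :=
    le_of_tendsto_of_tendsto' tendsto_const_nhds hbq_tendsto (fun n => hb_lower (φ n))
  have hdxq : dist x q = r := by
    have h1 : Filter.Tendsto (fun n => dist x (p (φ n))) Filter.atTop (nhds (dist x q)) :=
      ((continuous_const.dist continuous_id).tendsto q).comp hφ_tendsto
    have h2 : Filter.Tendsto (fun n => dist x (p (φ n))) Filter.atTop (nhds r) := by
      have : (fun n => dist x (p (φ n))) = fun _ => r := funext fun n => hp1 _
      rw [this]; exact tendsto_const_nhds
    exact tendsto_nhds_unique h1 h2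
  refine ⟨q, le_antisymm hbq_le hbq_ge, ?_⟩
  rw [hdxq, hr_def]; ring
end

section
/- Any Busemann function on a proper geodesic metric space is distance-like: if X is a proper geodesic metric space, c a geodesic ray in X, and b : X → ℝ its Busemann function (i.e., for every x ∈ X, d(x, c(t)) − t → b(x) as t → ∞), then b is continuous and for every x ∈ X and λ ∈ ℝ with b(x) ≥ λ, the level set b⁻¹(λ) is nonempty and b(x) = λ + dist(x, b⁻¹(λ)). -/
open Filter Metric Topology

/-!
A limit of the 1-Lipschitz functions `x ↦ dist x (c t) - t` is 1-Lipschitz, so the distance from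
`x` to the level set `b⁻¹' {λ}` is at least `b x - λ`. For the converse, put `s = b x - λ` and
pick on a geodesic from `x` to `c t` the point `p t` at distance `s` from `x`, so that
`dist (p t) (c t) = dist x (c t) - s`. The points `p t` stay in the compact ball `closedBall x s`,
and along a cluster point `z` of them the triangle inequality gives `b z ≤ b x - s`; the Lipschitz
bound forces equality, so `z` lies on the level set at distance `s` from `x`.
-/

theorem IsGeodesicSpace.exists_dist_eq_of_le {X : Type*} [MetricSpace X] (hX : IsGeodesicSpace X)
    {x y : X} {s : ℝ} (hs₀ : 0 ≤ s) (hs : s ≤ dist x y) :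
    ∃ p, dist x p = s ∧ dist p y = dist x y - s := by
  obtain ⟨γ, hγx, hγy, hγ⟩ := hX x y
  refine ⟨γ s, ?_, ?_⟩
  · have h := hγ 0 ⟨le_rfl, dist_nonneg⟩ s ⟨hs₀, hs⟩
    rw [hγx, zero_sub, abs_neg, abs_of_nonneg hs₀] at h
    exact h
  · have h := hγ s ⟨hs₀, hs⟩ (dist x y) ⟨dist_nonneg, le_rfl⟩
    rw [hγy, abs_sub_comm, abs_of_nonneg (sub_nonneg.2 hs)] at h
    exact h

theorem LipschitzWith.infDist_preimage_singleton_eq {X : Type*} [PseudoMetricSpace X]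
    {b : X → ℝ} (hb : LipschitzWith 1 b) {x z : X} (hz : dist x z ≤ b x - b z) :
    infDist x (b ⁻¹' {b z}) = b x - b z := by
  have hz_mem : z ∈ b ⁻¹' {b z} := Set.mem_singleton (b z)
  refine le_antisymm ((infDist_le_dist_of_mem hz_mem).trans hz) ?_
  refine (le_infDist ⟨z, hz_mem⟩).2 fun w (hw : b w = b z) => ?_
  rw [← hw, sub_le_iff_le_add']
  simpa using hb.le_add_mul x w

section TendstoDistSub

variable {X ι : Type*} {l : Filter ι} [l.NeBot] {f : ι → X} {g : ι → ℝ} {b : X → ℝ}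

theorem lipschitzWith_one_of_tendsto_dist_sub [PseudoMetricSpace X]
    (hb : ∀ x, Tendsto (fun i => dist x (f i) - g i) l (𝓝 (b x))) : LipschitzWith 1 b := by
  refine LipschitzWith.of_le_add fun x y => ?_
  refine le_of_tendsto_of_tendsto (hb x) ((hb y).add_const (dist x y)) (Eventually.of_forall ?_)
  intro i
  linarith [dist_triangle x y (f i)]

theorem exists_mem_closedBall_le_sub_of_tendsto_dist_sub [MetricSpace X] [ProperSpace X]
    (hX : IsGeodesicSpace X) (hg : Tendsto g l atTop)
    (hb : ∀ x, Tendsto (fun i => dist x (f i) - g i) l (𝓝 (b x))) (x : X) {s : ℝ} (hs : 0 ≤ s) :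
    ∃ z ∈ closedBall x s, b z ≤ b x - s := by
  have hfar : ∀ᶠ i in l, s ≤ dist x (f i) := by
    have : Tendsto (fun i => dist x (f i)) l atTop := by simpa using (hb x).add_atTop hg
    exact this.eventually_ge_atTop s
  obtain ⟨p, hp⟩ : ∃ p : ι → X, ∀ᶠ i in l,
      dist x (p i) = s ∧ dist (p i) (f i) = dist x (f i) - s :=
    (hfar.mono fun i hi => hX.exists_dist_eq_of_le hs hi).choice
  have hp_mem : map p l ≤ 𝓟 (closedBall x s) :=
    le_principal_iff.2 <| hp.mono fun i hi => by rw [mem_closedBall, dist_comm, hi.1]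
  obtain ⟨z, hz, hzp⟩ := (isCompact_closedBall x s).exists_mapClusterPt hp_mem
  obtain ⟨U, hUl, hpz⟩ := mapClusterPt_iff_ultrafilter.1 hzp
  refine ⟨z, hz, ?_⟩
  have hupper : Tendsto (fun i => dist z (p i) + (dist x (f i) - g i) - s) U
      (𝓝 (dist z z + b x - s)) :=
    ((tendsto_const_nhds.dist hpz).add ((hb x).mono_left hUl)).sub_const s
  rw [dist_self, zero_add] at hupper
  refine le_of_tendsto_of_tendsto ((hb z).mono_left hUl) hupper ?_
  filter_upwards [hUl hp] with i hi
  linarith [dist_triangle z (p i) (f i)]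

end TendstoDistSub

theorem busemann_is_distanceLike_general {X : Type*} [MetricSpace X] [ProperSpace X]
    (hX : IsGeodesicSpace X) (c : ℝ → X) (b : X → ℝ)
    (hb : ∀ x : X, Filter.Tendsto (fun t : ℝ => dist x (c t) - t) Filter.atTop (nhds (b x))) :
    Continuous b ∧ ∀ (x : X) (lam : ℝ), lam ≤ b x →
      (b ⁻¹' {lam}).Nonempty ∧ b x = lam + Metric.infDist x (b ⁻¹' {lam}) := by
  have hlip : LipschitzWith 1 b := lipschitzWith_one_of_tendsto_dist_sub (g := fun t => t) hb
  refine ⟨hlip.continuous, fun x lam hlam => ?_⟩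
  obtain ⟨z, hz, hbz⟩ :=
    exists_mem_closedBall_le_sub_of_tendsto_dist_sub hX tendsto_id hb x (sub_nonneg.2 hlam)
  have hxz : dist x z ≤ b x - lam := by rwa [dist_comm, ← mem_closedBall]
  have hbx_le : b x ≤ b z + dist x z := by simpa using hlip.le_add_mul x z
  obtain rfl : b z = lam := le_antisymm (by linarith) (by linarith)
  refine ⟨⟨z, Set.mem_singleton _⟩, ?_⟩
  rw [hlip.infDist_preimage_singleton_eq hxz]
  ring

/-- any Busemann function on a proper geodesic metric space is distance-like. -/
theorem busemann_is_distanceLike {X : Type*} [MetricSpace X] [ProperSpace X]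
    (hX : IsGeodesicSpace X) (c : ℝ → X) (hc : IsGeodesicRay c) (b : X → ℝ)
    (hb : ∀ x : X, Filter.Tendsto (fun t : ℝ => dist x (c t) - t) Filter.atTop (nhds (b x))) :
    Continuous b ∧ ∀ (x : X) (lam : ℝ), lam ≤ b x →
      (b ⁻¹' {lam}).Nonempty ∧ b x = lam + Metric.infDist x (b ⁻¹' {lam}) :=
  busemann_is_distanceLike_general hX c b hb
end

section
/- Existence of gradient rays: let X be a proper geodesic metric space, h : X → ℝ a distance-like function, and p ∈ X. Then there exists a geodesic ray g : [0,∞) → X with g(0) = p and h(g(t)) = h(p) − t for all t ≥ 0 (an h-gradient ray starting at p). -/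
/-- A function `h : X → ℝ` on a metric space is *distance-like*. -/
def DistanceLike {X : Type*} [MetricSpace X] (h : X → ℝ) : Prop :=
  Continuous h ∧ ∀ (x : X) (lam : ℝ), lam ≤ h x →
    (h ⁻¹' {lam}).Nonempty ∧ h x = lam + Metric.infDist x (h ⁻¹' {lam})

/-- A distance-like function is 1-Lipschitz-ish: `h x - h y ≤ dist x y`. -/
lemma DistanceLike.sub_le {X : Type*} [MetricSpace X] {h : X → ℝ}
    (hh : DistanceLike h) (x y : X) : h x - h y ≤ dist x y := by
  rcases le_or_gt (h x) (h y) with hle | hlt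
  · linarith [dist_nonneg (x := x) (y := y)]
  · obtain ⟨-, hx⟩ := hh.2 x (h y) hlt.le
    have hy : y ∈ h ⁻¹' {h y} := rfl
    have := Metric.infDist_le_dist_of_mem hy (x := x)
    linarith

/-- Finite gradient segments of each length `n`. -/
lemma exists_segment {X : Type*} [MetricSpace X] [ProperSpace X]
    (hX : IsGeodesicSpace X) (h : X → ℝ) (hh : DistanceLike h) (p : X) (n : ℕ) :
    ∃ g : ℝ → X, g 0 = p ∧
      (∀ s ∈ Set.Icc (0:ℝ) n, ∀ t ∈ Set.Icc (0:ℝ) n, dist (g s) (g t) = |s - t|) ∧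
      (∀ t ∈ Set.Icc (0:ℝ) n, h (g t) = h p - t) := by
  set lam : ℝ := h p - n with hlam
  have hle : lam ≤ h p := by simp [hlam, Nat.cast_nonneg n]
  obtain ⟨hne, hinf⟩ := hh.2 p lam hle
  have hclosed : IsClosed (h ⁻¹' {lam}) := isClosed_singleton.preimage hh.1
  obtain ⟨y, hyS, hyd⟩ := hclosed.exists_infDist_eq_dist hne p
  have hdist : dist p y = (n : ℝ) := by rw [← hyd]; linarith
  obtain ⟨γ, hγ0, hγd, hγ⟩ := hX p y
  refine ⟨γ, hγ0, ?_, ?_⟩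
  · intro s hs t ht
    exact hγ s (by rwa [hdist]) t (by rwa [hdist])
  · intro t ht
    have ht' : t ∈ Set.Icc (0:ℝ) (dist p y) := by rwa [hdist]
    have hd0 : (0:ℝ) ∈ Set.Icc (0:ℝ) (dist p y) := ⟨le_rfl, dist_nonneg⟩
    have hdd : dist p y ∈ Set.Icc (0:ℝ) (dist p y) := ⟨dist_nonneg, le_rfl⟩
    have h1 : dist (γ t) (γ 0) = t := by
      rw [hγ t ht' 0 hd0]; simp [abs_of_nonneg ht.1]
    have h2 : dist (γ t) (γ (dist p y)) = n - t := by
      rw [hγ t ht' (dist p y) hdd, hdist, abs_of_nonpos (by linarith [ht.2])]; ring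
    have hylam : h y = lam := hyS
    have lb := hh.sub_le p (γ t)
    have ub := hh.sub_le (γ t) y
    rw [hγ0] at h1
    rw [hγd] at h2
    rw [dist_comm] at h1
    have : h (γ t) - h y ≤ n - t := by rwa [h2] at ub
    have : h (γ t) ≤ h p - t := by rw [hylam] at this; simp [hlam] at this; linarith
    have : h p - h (γ t) ≤ t := by rwa [h1] at lb
    linarith

/-- existence of gradient rays for distance-like functions on proper geodesic
metric spaces. -/
theorem gradientRay_exists {X : Type*} [MetricSpace X] [ProperSpace X]
    (hX : IsGeodesicSpace X) (h : X → ℝ) (hh : DistanceLike h) (p : X) :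
    ∃ g : ℝ → X, g 0 = p ∧
      (∀ s t : ℝ, 0 ≤ s → 0 ≤ t → dist (g s) (g t) = |s - t|) ∧
      (∀ t : ℝ, 0 ≤ t → h (g t) = h p - t) := by
  choose G hG0 hGd hGh using fun n => exists_segment hX h hh p n
  -- clamped family
  set F : ℕ → ℝ → X := fun n t => G n (min (max t 0) n) with hF
  have hclamp : ∀ (n : ℕ) (t : ℝ), min (max t 0) n ∈ Set.Icc (0:ℝ) n := by
    intro n t
    exact ⟨le_min (le_max_right t 0) (Nat.cast_nonneg n), min_le_right _ _⟩
  have hFeq : ∀ (n : ℕ) (t : ℝ), 0 ≤ t → t ≤ n → F n t = G n t := by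
    intro n t h0 hn
    simp [hF, max_eq_left h0, min_eq_left hn]
  have hFball : ∀ (n : ℕ) (t : ℝ), F n t ∈ Metric.closedBall p (max t 0) := by
    intro n t
    have h0 : (0:ℝ) ∈ Set.Icc (0:ℝ) n := ⟨le_rfl, Nat.cast_nonneg n⟩
    have := hGd n _ (hclamp n t) 0 h0
    rw [hG0 n] at this
    simp only [Metric.mem_closedBall, hF]
    rw [this]
    rw [sub_zero, abs_of_nonneg (hclamp n t).1]
    exact min_le_left _ _
  -- ultrafilter
  set U : Ultrafilter ℕ := Ultrafilter.of Filter.atTop with hU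
  have hUle : (U : Filter ℕ) ≤ Filter.atTop := Ultrafilter.of_le _
  have hlim : ∀ t : ℝ, ∃ x ∈ Metric.closedBall p (max t 0),
      Filter.Tendsto (fun n => F n t) U (nhds x) := by
    intro t
    have hcomp : IsCompact (Metric.closedBall p (max t 0)) :=
      isCompact_closedBall p _
    have hmem : (U.map (fun n => F n t) : Filter X) ≤ Filter.principal
        (Metric.closedBall p (max t 0)) := by
      rw [Filter.le_principal_iff]
      exact Filter.mem_map.2 (Filter.univ_mem' (fun n => hFball n t))
    obtain ⟨x, hx, hxle⟩ := hcomp.ultrafilter_le_nhds _ hmem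
    exact ⟨x, hx, hxle⟩
  choose g hgball hg using hlim
  have key : ∀ t : ℝ, 0 ≤ t → ∀ᶠ n in (U : Filter ℕ), F n t = G n t ∧ t ≤ n := by
    intro t ht
    apply hUle
    filter_upwards [Filter.eventually_ge_atTop ⌈t⌉.toNat] with n hn
    have h1 : (⌈t⌉ : ℝ) ≤ (n : ℝ) := by
      have : ⌈t⌉ ≤ (n : ℤ) := by
        have := Int.toNat_le.mp hn
        exact_mod_cast this
      exact_mod_cast this
    have : t ≤ (n:ℝ) := le_trans (Int.le_ceil t) h1
    exact ⟨hFeq n t ht this, this⟩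
  refine ⟨g, ?_, ?_, ?_⟩
  · -- g 0 = p
    have h1 : Filter.Tendsto (fun n => F n 0) U (nhds (g 0)) := hg 0
    have h2 : Filter.Tendsto (fun n => F n 0) U (nhds p) := by
      apply Filter.Tendsto.congr' _ tendsto_const_nhds
      filter_upwards [key 0 le_rfl] with n hn
      rw [← hG0 n, ← hn.1]
    exact tendsto_nhds_unique h1 h2
  · intro s t hs ht
    have h1 : Filter.Tendsto (fun n => dist (F n s) (F n t)) U
        (nhds (dist (g s) (g t))) := (hg s).dist (hg t)
    have h2 : Filter.Tendsto (fun n => dist (F n s) (F n t)) U (nhds |s - t|) := by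
      apply Filter.Tendsto.congr' _ tendsto_const_nhds
      filter_upwards [key s hs, key t ht] with n hns hnt
      rw [hns.1, hnt.1, hGd n s ⟨hs, hns.2⟩ t ⟨ht, hnt.2⟩]
    exact tendsto_nhds_unique h1 h2
  · intro t ht
    have h1 : Filter.Tendsto (fun n => h (F n t)) U (nhds (h (g t))) :=
      (hh.1.tendsto _).comp (hg t)
    have h2 : Filter.Tendsto (fun n => h (F n t)) U (nhds (h p - t)) := by
      apply Filter.Tendsto.congr' _ tendsto_const_nhds
      filter_upwards [key t ht] with n hn
      rw [hn.1, hGh n t ⟨ht, hn.2⟩]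
    exact tendsto_nhds_unique h1 h2
end

section
/- Coarse convexity of the distance to the opposite vertex in a thin triangle: let X be a metric space, x, y, z ∈ X, δ' ≥ 0, and let γ_yz, γ_yx, γ_zx be geodesic segments from y to z, from y to x, and from z to x respectively. Set b = (d(x,y) + d(y,z) − d(x,z))/2. Assume: (i) for every u ∈ [0, b] there exists v ∈ [0, d(y,x)] with d(γ_yz(u), γ_yx(v)) ≤ δ'; and (ii) for every u ∈ [b, d(y,z)] there exists v ∈ [0, d(z,x)] with d(γ_yz(u), γ_zx(v)) ≤ δ'. Then for every t ∈ [0,1], d(x, γ_yz(t·d(y,z))) ≤ (1 − t)·d(x,y) + t·d(x,z) + 2δ'. -/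
/-- coarse convexity of the distance to the opposite vertex in a thin triangle
(slim condition 2 implies coarse convexity of `d(x, ·)` along the opposite side). -/
theorem thin_triangle_coarse_convexity {X : Type*} [MetricSpace X] (x y z : X)
    (δ' : ℝ) (hδ' : 0 ≤ δ')
    (γyz γyx γzx : ℝ → X)
    (hyz : IsGeodesicSegment γyz y z) (hyx : IsGeodesicSegment γyx y x)
    (hzx : IsGeodesicSegment γzx z x)
    (bpt : ℝ) (hbpt : bpt = (dist x y + dist y z - dist x z) / 2)
    (hside1 : ∀ u ∈ Set.Icc (0 : ℝ) bpt,
      ∃ v ∈ Set.Icc (0 : ℝ) (dist y x), dist (γyz u) (γyx v) ≤ δ')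
    (hside2 : ∀ u ∈ Set.Icc bpt (dist y z),
      ∃ v ∈ Set.Icc (0 : ℝ) (dist z x), dist (γyz u) (γzx v) ≤ δ') :
    ∀ t ∈ Set.Icc (0 : ℝ) 1,
      dist x (γyz (t * dist y z)) ≤ (1 - t) * dist x y + t * dist x z + 2 * δ' := by
  obtain ⟨hy0, hyL, hyI⟩ := hyz
  obtain ⟨hx0, hxL, hxI⟩ := hyx
  obtain ⟨hz0, hzL, hzI⟩ := hzx
  intro t ⟨ht0, ht1⟩
  have dyz : (0:ℝ) ≤ dist y z := dist_nonneg
  set u := t * dist y z with hu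
  have hu0 : 0 ≤ u := mul_nonneg ht0 dyz
  have huL : u ≤ dist y z := by nlinarith
  have tri1 : dist x z ≤ dist x y + dist y z := dist_triangle x y z
  have tri2 : dist x y ≤ dist x z + dist y z := by
    have := dist_triangle x z y
    rw [dist_comm z y] at this; linarith
  have hbpt0 : 0 ≤ bpt := by rw [hbpt]; linarith
  have hbptL : bpt ≤ dist y z := by rw [hbpt]; linarith
  have hdy : dist y (γyz u) = u := by
    have := hyI 0 ⟨le_refl 0, dyz⟩ u ⟨hu0, huL⟩
    rw [hy0] at this
    rw [this, abs_of_nonpos (by linarith)]; ring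
  have hdz : dist z (γyz u) = dist y z - u := by
    have := hyI (dist y z) ⟨dyz, le_refl _⟩ u ⟨hu0, huL⟩
    rw [hyL] at this
    rw [this, abs_of_nonneg (by linarith)]
  rcases le_or_gt u bpt with hc | hc
  · obtain ⟨v, ⟨hv0, hvL⟩, hvd⟩ := hside1 u ⟨hu0, hc⟩
    have hdyv : dist y (γyx v) = v := by
      have := hxI 0 ⟨le_refl 0, dist_nonneg⟩ v ⟨hv0, hvL⟩
      rw [hx0] at this
      rw [this, abs_of_nonpos (by linarith)]; ring
    have hdxv : dist x (γyx v) = dist y x - v := by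
      have := hxI (dist y x) ⟨dist_nonneg, le_refl _⟩ v ⟨hv0, hvL⟩
      rw [hxL] at this
      rw [this, abs_of_nonneg (by linarith)]
    have hv_lb : u - δ' ≤ v := by
      have := dist_triangle y (γyx v) (γyz u)
      rw [hdy, hdyv, dist_comm (γyx v) (γyz u)] at this; linarith
    have key : dist x (γyz u) ≤ dist y x - v + δ' := by
      have := dist_triangle x (γyx v) (γyz u)
      rw [hdxv, dist_comm (γyx v) (γyz u)] at this; linarith
    rw [dist_comm y x] at key
    nlinarith
  · obtain ⟨v, ⟨hv0, hvL⟩, hvd⟩ := hside2 u ⟨le_of_lt hc, huL⟩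
    have hdzv : dist z (γzx v) = v := by
      have := hzI 0 ⟨le_refl 0, dist_nonneg⟩ v ⟨hv0, hvL⟩
      rw [hz0] at this
      rw [this, abs_of_nonpos (by linarith)]; ring
    have hdxv : dist x (γzx v) = dist z x - v := by
      have := hzI (dist z x) ⟨dist_nonneg, le_refl _⟩ v ⟨hv0, hvL⟩
      rw [hzL] at this
      rw [this, abs_of_nonneg (by linarith)]
    have hv_lb : (dist y z - u) - δ' ≤ v := by
      have := dist_triangle z (γzx v) (γyz u)
      rw [hdz, hdzv, dist_comm (γzx v) (γyz u)] at this; linarith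
    have key : dist x (γyz u) ≤ dist z x - v + δ' := by
      have := dist_triangle x (γzx v) (γyz u)
      rw [hdxv, dist_comm (γzx v) (γyz u)] at this; linarith
    rw [dist_comm z x] at key
    nlinarith
end

section
/- Geodesics from a nearby point to a Morse ray are uniformly Morse: for every Morse gauge N and every D ≥ 0 there exists a Morse gauge N' with N' ≥ N such that the following holds. Let X be a proper geodesic metric space, α an N-Morse geodesic ray in X with α(0) = p, and p' ∈ X with d(p, p') ≤ D. Then every geodesic segment from p' to a point of the image of α is N'-Morse. -/
/-- A `(lam, eps)`-quasi-geodesic defined on `[a, b]`. -/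
def IsQuasiGeodesicOn {X : Type*} [MetricSpace X] (lam eps a b : ℝ) (σ : ℝ → X) : Prop :=
  ∀ s ∈ Set.Icc a b, ∀ t ∈ Set.Icc a b,
    |s - t| / lam - eps ≤ dist (σ s) (σ t) ∧ dist (σ s) (σ t) ≤ lam * |s - t| + eps

/-- A *Morse gauge* is a function `[1,∞) × [0,∞) → [0,∞)`. -/
def IsMorseGauge (N : ℝ → ℝ → ℝ) : Prop :=
  ∀ lam eps : ℝ, 1 ≤ lam → 0 ≤ eps → 0 ≤ N lam eps

/-- A subset `A` of `X` (the image of a geodesic) is *`N`-Morse* if every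
`(lam, eps)`-quasi-geodesic with endpoints on `A` stays in the closed
`N lam eps`-neighborhood of `A`. -/
def IsMorseSet {X : Type*} [MetricSpace X] (N : ℝ → ℝ → ℝ) (A : Set X) : Prop :=
  ∀ (lam eps a b : ℝ) (σ : ℝ → X), 1 ≤ lam → 0 ≤ eps → a ≤ b →
    IsQuasiGeodesicOn lam eps a b σ → σ a ∈ A → σ b ∈ A →
    ∀ s ∈ Set.Icc a b, Metric.infDist (σ s) A ≤ N lam eps

open Set Metric

theorem coarse_intermediate_value_of_le {P : ℝ → ℝ → Prop} {a b J va vb w : ℝ}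
    (hab : a ≤ b) (hP : ∀ s ∈ Icc a b, ∃ v, P s v)
    (hJ : ∀ s ∈ Icc a b, ∀ t ∈ Icc a b, |s - t| ≤ 1 → ∀ v v', P s v → P t v' → |v - v'| ≤ J)
    (ha : P a va) (hb : P b vb) (hva : va ≤ w) (hwb : w ≤ vb) :
    ∃ s ∈ Icc a b, ∃ v, P s v ∧ |v - w| ≤ J := by
  have hbmem : b ∈ Icc a b := right_mem_Icc.2 hab
  by_cases hbS : ∃ v ≤ w, P b v
  · obtain ⟨v, hvw, hv⟩ := hbS
    have := hJ b hbmem b hbmem (by simp) v vb hv hb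
    exact ⟨b, hbmem, v, hv, by rw [abs_le] at *; constructor <;> linarith⟩
  -- Just before `W = sSup S` some admissible `v` is at most `w`; just after it, all exceed `w`.
  set S := {s ∈ Icc a b | ∃ v ≤ w, P s v}
  have haS : a ∈ S := ⟨left_mem_Icc.2 hab, va, hva, ha⟩
  have hSbdd : BddAbove S := ⟨b, fun s hs => hs.1.2⟩
  set W := sSup S
  have haW : a ≤ W := le_csSup hSbdd haS
  obtain ⟨s₁, ⟨hs₁, v₁, hv₁w, hv₁⟩, hWs₁⟩ :=
    exists_lt_of_lt_csSup ⟨a, haS⟩ (by linarith : W - 1/2 < W)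
  have hs₁W : s₁ ≤ W := le_csSup hSbdd ⟨hs₁, v₁, hv₁w, hv₁⟩
  set s₂ := min (W + 1/2) b
  have hs₂ : s₂ ∈ Icc a b := ⟨le_min (by linarith) hab, min_le_right _ _⟩
  obtain ⟨v₂, hv₂⟩ := hP s₂ hs₂
  have hwv₂ : w < v₂ := by
    by_contra! hv₂w
    have hs₂W : s₂ ≤ W := le_csSup hSbdd ⟨hs₂, v₂, hv₂w, hv₂⟩
    have hbs₂ : s₂ = b := min_eq_right (by
      rcases min_le_iff.1 hs₂W with h | h <;> linarith [hs₁.2])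
    exact hbS ⟨v₂, hv₂w, hbs₂ ▸ hv₂⟩
  have hs₁₂ : |s₁ - s₂| ≤ 1 := by
    have : s₁ ≤ s₂ := le_min (by linarith) hs₁.2
    rw [abs_le]; constructor <;> linarith [min_le_left (W + 1/2) b]
  have := hJ s₁ hs₁ s₂ hs₂ hs₁₂ v₁ v₂ hv₁ hv₂
  exact ⟨s₁, hs₁, v₁, hv₁, by rw [abs_le] at *; constructor <;> linarith⟩

theorem coarse_intermediate_value {P : ℝ → ℝ → Prop} {a b J va vb w : ℝ}
    (hab : a ≤ b) (hP : ∀ s ∈ Icc a b, ∃ v, P s v)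
    (hJ : ∀ s ∈ Icc a b, ∀ t ∈ Icc a b, |s - t| ≤ 1 → ∀ v v', P s v → P t v' → |v - v'| ≤ J)
    (ha : P a va) (hb : P b vb) (hw : w ∈ uIcc va vb) :
    ∃ s ∈ Icc a b, ∃ v, P s v ∧ |v - w| ≤ J := by
  rcases le_total va vb with h | h
  · rw [uIcc_of_le h] at hw
    exact coarse_intermediate_value_of_le hab hP hJ ha hb hw.1 hw.2
  · rw [uIcc_of_ge h] at hw
    obtain ⟨s, hs, v, hv, hvw⟩ := coarse_intermediate_value_of_le (P := fun s v => P s (-v))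
      hab (fun s hs => let ⟨v, hv⟩ := hP s hs; ⟨-v, by rwa [neg_neg]⟩)
      (fun s hs t ht hst v v' hv hv' => by
        simpa only [neg_sub_neg, abs_sub_comm v] using hJ s hs t ht hst _ _ hv hv')
      (by simpa using ha) (by simpa using hb) (neg_le_neg hw.2) (neg_le_neg hw.1)
    exact ⟨s, hs, -v, hv, by rw [← abs_neg]; convert hvw using 2; ring⟩

section Geodesics

variable {X : Type*} [MetricSpace X]

theorem IsGeodesicSegment.isQuasiGeodesicOn {γ : ℝ → X} {x y : X}
    (hγ : IsGeodesicSegment γ x y) : IsQuasiGeodesicOn 1 0 0 (dist x y) γ := fun s hs t ht => by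
  rw [hγ.2.2 s hs t ht]; constructor <;> simp

theorem IsGeodesicSegment.dist_left {γ : ℝ → X} {x y : X} (hγ : IsGeodesicSegment γ x y) {s : ℝ}
    (hs : s ∈ Icc 0 (dist x y)) : dist x (γ s) = s := by
  rw [← hγ.1, hγ.2.2 0 (left_mem_Icc.2 dist_nonneg) s hs, zero_sub, abs_neg, abs_of_nonneg hs.1]

namespace IsGeodesicRay

variable {α : ℝ → X}

theorem dist_eq (hα : IsGeodesicRay α) {s t : ℝ} (hs : 0 ≤ s) (ht : 0 ≤ t) :
    dist (α s) (α t) = |s - t| :=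
  hα s t hs ht

theorem isClosed_image (hα : IsGeodesicRay α) : IsClosed (α '' Ici 0) := by
  have : CompleteSpace (Ici (0 : ℝ)) := isClosed_Ici.completeSpace_coe
  have hiso : Isometry fun t : Ici (0 : ℝ) => α t :=
    Isometry.of_dist_eq fun s t => by rw [hα.dist_eq s.2 t.2, Subtype.dist_eq, Real.dist_eq]
  rw [image_eq_range]
  exact hiso.isClosedEmbedding.isClosed_range

theorem exists_dist_le_of_infDist_le [ProperSpace X] (hα : IsGeodesicRay α) {x : X} {K : ℝ}
    (hx : infDist x (α '' Ici 0) ≤ K) : ∃ v, 0 ≤ v ∧ dist x (α v) ≤ K := by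
  obtain ⟨_, ⟨v, hv, rfl⟩, hxv⟩ :=
    hα.isClosed_image.exists_infDist_eq_dist ⟨α 0, 0, self_mem_Ici, rfl⟩ x
  exact ⟨v, hv, hxv ▸ hx⟩

theorem abs_sub_le_of_dist_le (hα : IsGeodesicRay α) {x y : X} {v v' K : ℝ} (hv : 0 ≤ v)
    (hv' : 0 ≤ v') (hx : dist x (α v) ≤ K) (hy : dist y (α v') ≤ K) :
    |v - v'| ≤ dist x y + 2 * K := by
  rw [← hα.dist_eq hv hv']
  linarith [dist_triangle4 (α v) x y (α v'), dist_comm x (α v)]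


theorem exists_near_of_coarse_path (hα : IsGeodesicRay α) {f : ℝ → X} {a b C K va vb w : ℝ}
    (hab : a ≤ b) (hf : ∀ s ∈ Icc a b, ∀ t ∈ Icc a b, |s - t| ≤ 1 → dist (f s) (f t) ≤ C)
    (hnear : ∀ s ∈ Icc a b, ∃ v, 0 ≤ v ∧ dist (f s) (α v) ≤ K)
    (hva : 0 ≤ va) (ha : dist (f a) (α va) ≤ K) (hvb : 0 ≤ vb) (hb : dist (f b) (α vb) ≤ K)
    (hw : w ∈ uIcc va vb) :
    ∃ s ∈ Icc a b, ∃ v, 0 ≤ v ∧ dist (f s) (α v) ≤ K ∧ |v - w| ≤ C + 2 * K := by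
  obtain ⟨s, hs, v, ⟨hv, hsv⟩, hvw⟩ :=
    coarse_intermediate_value (P := fun s v => 0 ≤ v ∧ dist (f s) (α v) ≤ K) hab hnear
      (fun s hs t ht hst v v' hv hv' =>
        (hα.abs_sub_le_of_dist_le hv.1 hv'.1 hv.2 hv'.2).trans
          (add_le_add_left (hf s hs t ht hst) _))
      ⟨hva, ha⟩ ⟨hvb, hb⟩ hw
  exact ⟨s, hs, v, hv, hsv, hvw⟩

theorem infDist_segment_le_of_near (hα : IsGeodesicRay α) {γ : ℝ → X} {x y : X}
    (hγ : IsGeodesicSegment γ x y) {K vx vy u : ℝ}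
    (hnear : ∀ s ∈ Icc 0 (dist x y), ∃ v, 0 ≤ v ∧ dist (γ s) (α v) ≤ K)
    (hvx : 0 ≤ vx) (hx : dist x (α vx) ≤ K) (hvy : 0 ≤ vy) (hy : dist y (α vy) ≤ K)
    (hu : u ∈ uIcc vx vy) : infDist (α u) (γ '' Icc 0 (dist x y)) ≤ 3 * K + 1 := by
  have hu0 : 0 ≤ u := (le_min hvx hvy).trans hu.1
  obtain ⟨s, hs, v, hv, hsv, hvu⟩ := hα.exists_near_of_coarse_path (C := 1) dist_nonneg
    (fun s hs t ht hst => (hγ.isQuasiGeodesicOn s hs t ht).2.trans (by linarith))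
    hnear hvx (by rwa [hγ.1]) hvy (by rwa [hγ.2.1]) hu
  calc infDist (α u) (γ '' Icc 0 (dist x y)) ≤ dist (α u) (γ s) :=
        infDist_le_dist_of_mem ⟨s, hs, rfl⟩
    _ ≤ dist (α u) (α v) + dist (γ s) (α v) := dist_triangle_right _ _ _
    _ ≤ 3 * K + 1 := by rw [hα.dist_eq hu0 hv, abs_sub_comm]; linarith

-- This is `lam ^ 2 * (2 * K + 2 * J + eps) + eps + J + 2 * K` with `J = lam + eps + 2 * K`.
def excursionBound (lam eps K : ℝ) : ℝ :=
  lam ^ 2 * (6 * K + 2 * lam + 3 * eps) + 4 * K + lam + 2 * eps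

theorem le_max_add_excursionBound (hα : IsGeodesicRay α) {σ : ℝ → X}
    {lam eps K a b u₁ u₂ s u : ℝ} (hlam : 0 < lam) (heps : 0 ≤ eps)
    (hσ : IsQuasiGeodesicOn lam eps a b σ)
    (hnear : ∀ r ∈ Icc a b, ∃ v, 0 ≤ v ∧ dist (σ r) (α v) ≤ K)
    (hu₁ : 0 ≤ u₁) (ha : σ a = α u₁) (hu₂ : 0 ≤ u₂) (hb : σ b = α u₂)
    (hs : s ∈ Icc a b) (hu : 0 ≤ u) (hsu : dist (σ s) (α u) ≤ K) :
    u ≤ max u₁ u₂ + excursionBound lam eps K := by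
  have hK : 0 ≤ K := dist_nonneg.trans hsu
  set V := max u₁ u₂
  rcases le_or_gt u V with huV | hVu
  · have : 0 ≤ excursionBound lam eps K := by unfold excursionBound; positivity
    linarith
  have hcoarse : ∀ r ∈ Icc a b, ∀ r' ∈ Icc a b, |r - r'| ≤ 1 → dist (σ r) (σ r') ≤ lam + eps :=
    fun r hr r' hr' h => (hσ r hr r' hr').2.trans (by nlinarith)
  have hleft : Icc a s ⊆ Icc a b := Icc_subset_Icc_right hs.2
  have hright : Icc s b ⊆ Icc a b := Icc_subset_Icc_left hs.1
  -- Before and after `s` the path passes near `α V`; these two times are close by the lower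
  -- quasi-geodesic bound, hence so is `s`, and this bounds `u - V`.
  obtain ⟨s₁, hs₁, v₁, hv₁, hs₁v₁, hv₁V⟩ := hα.exists_near_of_coarse_path (w := V) hs.1
    (fun r hr r' hr' => hcoarse r (hleft hr) r' (hleft hr')) (fun r hr => hnear r (hleft hr))
    hu₁ (by rw [ha, dist_self]; exact hK) hu hsu
    (mem_uIcc.2 (.inl ⟨le_max_left _ _, hVu.le⟩))
  obtain ⟨s₂, hs₂, v₂, hv₂, hs₂v₂, hv₂V⟩ := hα.exists_near_of_coarse_path (w := V) hs.2
    (fun r hr r' hr' => hcoarse r (hright hr) r' (hright hr')) (fun r hr => hnear r (hright hr))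
    hu hsu hu₂ (by rw [hb, dist_self]; exact hK)
    (mem_uIcc.2 (.inr ⟨le_max_right _ _, hVu.le⟩))
  set J := lam + eps + 2 * K
  have hd₁₂ : dist (σ s₁) (σ s₂) ≤ 2 * K + 2 * J := by
    calc dist (σ s₁) (σ s₂) ≤ dist (σ s₁) (α v₁) + dist (α v₁) (α v₂) + dist (α v₂) (σ s₂) :=
          dist_triangle4 _ _ _ _
      _ ≤ 2 * K + 2 * J := by
        have : |v₁ - v₂| ≤ 2 * J := by
          rw [abs_le] at hv₁V hv₂V ⊢; constructor <;> linarith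
        linarith [dist_comm (α v₂) (σ s₂), hα.dist_eq hv₁ hv₂]
  have hs₁s₂ : s₂ - s₁ ≤ lam * (2 * K + 2 * J + eps) := by
    have h := (hσ s₁ (hleft hs₁) s₂ (hright hs₂)).1
    rw [abs_sub_comm, abs_of_nonneg (by linarith [hs₁.2, hs₂.1])] at h
    rw [← div_le_iff₀' hlam]
    linarith
  have hs₁s : dist (σ s₁) (σ s) ≤ lam ^ 2 * (2 * K + 2 * J + eps) + eps := by
    have h := (hσ s₁ (hleft hs₁) s hs).2
    rw [abs_sub_comm, abs_of_nonneg (by linarith [hs₁.2])] at h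
    have : lam * (s - s₁) ≤ lam * (lam * (2 * K + 2 * J + eps)) :=
      mul_le_mul_of_nonneg_left (by linarith [hs₂.1]) hlam.le
    linarith
  have huv₁ := hα.abs_sub_le_of_dist_le hu hv₁ hsu hs₁v₁
  rw [abs_le] at hv₁V huv₁
  unfold excursionBound
  linarith [dist_comm (σ s) (σ s₁)]

end IsGeodesicRay

end Geodesics

section Extension

variable {X : Type*} [MetricSpace X]

theorem IsQuasiGeodesicOn.of_near_projIcc {σ τ : ℝ → X} {lam eps a b a' b' m : ℝ}
    (hσ : IsQuasiGeodesicOn lam eps a b σ) (hab : a ≤ b) (hlam : 1 ≤ lam)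
    (hnear : ∀ r ∈ Icc a' b',
      |r - projIcc a b hab r| ≤ m ∧ dist (τ r) (σ (projIcc a b hab r)) ≤ m) :
    IsQuasiGeodesicOn lam (eps + 4 * m) a' b' τ := by
  intro r hr r' hr'
  obtain ⟨hrc, hτr⟩ := hnear r hr
  obtain ⟨hrc', hτr'⟩ := hnear r' hr'
  obtain ⟨hlow, hup⟩ := hσ _ (projIcc a b hab r).2 _ (projIcc a b hab r').2
  set c : ℝ := ↑(projIcc a b hab r)
  set c' : ℝ := ↑(projIcc a b hab r')
  have hm : 0 ≤ m := (abs_nonneg _).trans hrc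
  have hcc : |c - c'| ≤ |r - r'| := abs_projIcc_sub_projIcc hab
  have hrr : |r - r'| ≤ |c - c'| + 2 * m := by
    linarith [abs_sub_le r c r', abs_sub_le c c' r', abs_sub_comm c' r']
  constructor
  · have : |r - r'| / lam ≤ |c - c'| / lam + 2 * m :=
      calc |r - r'| / lam ≤ (|c - c'| + 2 * m) / lam := by gcongr
        _ = |c - c'| / lam + 2 * m / lam := add_div _ _ _
        _ ≤ |c - c'| / lam + 2 * m := by gcongr; exact div_le_self (by positivity) hlam
    linarith [dist_triangle4 (σ c) (τ r) (τ r') (σ c'), dist_comm (σ c) (τ r)]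
  · have : lam * |c - c'| ≤ lam * |r - r'| := by gcongr
    linarith [dist_triangle4 (τ r) (σ c) (σ c') (τ r'), dist_comm (σ c') (τ r')]

noncomputable def extendByGeodesics (g₁ σ g₂ : ℝ → X) (a b ℓ : ℝ) : ℝ → X :=
  fun r => if r ≤ a then g₁ (r - (a - ℓ)) else if r < b then σ r else g₂ (r - b)

variable {g₁ σ g₂ : ℝ → X} {a b : ℝ} {x y : X}

theorem eqOn_extendByGeodesics (hg₁ : IsGeodesicSegment g₁ x (σ a))
    (hg₂ : IsGeodesicSegment g₂ (σ b) y) :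
    EqOn (extendByGeodesics g₁ σ g₂ a b (dist x (σ a))) σ (Icc a b) := by
  intro r hr
  by_cases hra : r ≤ a
  · obtain rfl : r = a := le_antisymm hra hr.1
    simp only [extendByGeodesics, if_pos le_rfl, sub_sub_cancel, hg₁.2.1]
  by_cases hrb : r < b
  · simp only [extendByGeodesics, if_neg hra, if_pos hrb]
  · obtain rfl : r = b := le_antisymm hr.2 (not_lt.1 hrb)
    simp only [extendByGeodesics, if_neg hra, if_neg hrb, sub_self, hg₂.1]

theorem dist_extendByGeodesics_projIcc (hab : a ≤ b) (hg₁ : IsGeodesicSegment g₁ x (σ a))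
    (hg₂ : IsGeodesicSegment g₂ (σ b) y) {r : ℝ}
    (hr : r ∈ Icc (a - dist x (σ a)) (b + dist (σ b) y)) :
    dist (extendByGeodesics g₁ σ g₂ a b (dist x (σ a)) r) (σ (projIcc a b hab r)) =
      |r - projIcc a b hab r| := by
  by_cases hra : r ≤ a
  · rw [projIcc_of_le_left hab hra]
    simp only [extendByGeodesics, if_pos hra]
    have h := hg₁.2.2 (r - (a - dist x (σ a))) ⟨by linarith [hr.1], by linarith⟩ _
      (right_mem_Icc.2 dist_nonneg)
    rw [hg₁.2.1] at h
    rw [h, sub_sub, sub_add_cancel]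
  by_cases hrb : r < b
  · have hr' : r ∈ Icc a b := ⟨(not_le.1 hra).le, hrb.le⟩
    rw [projIcc_of_mem hab hr', ← eqOn_extendByGeodesics hg₁ hg₂ hr', dist_self, sub_self,
      abs_zero]
  · rw [projIcc_of_right_le hab (not_lt.1 hrb)]
    simp only [extendByGeodesics, if_neg hra, if_neg hrb]
    have h := hg₂.2.2 (r - b) ⟨by linarith [not_lt.1 hrb], by linarith [hr.2]⟩ _
      (left_mem_Icc.2 dist_nonneg)
    rwa [hg₂.1, sub_zero] at h

theorem extendByGeodesics_left (hg₁ : IsGeodesicSegment g₁ x (σ a)) :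
    extendByGeodesics g₁ σ g₂ a b (dist x (σ a)) (a - dist x (σ a)) = x := by
  simp only [extendByGeodesics, if_pos (sub_le_self a dist_nonneg), sub_self, hg₁.1]

theorem extendByGeodesics_right (hab : a ≤ b) (hg₁ : IsGeodesicSegment g₁ x (σ a))
    (hg₂ : IsGeodesicSegment g₂ (σ b) y) :
    extendByGeodesics g₁ σ g₂ a b (dist x (σ a)) (b + dist (σ b) y) = y := by
  rcases eq_or_lt_of_le (dist_nonneg : 0 ≤ dist (σ b) y) with h | h
  · rw [← h, add_zero, eqOn_extendByGeodesics hg₁ hg₂ (right_mem_Icc.2 hab)]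
    exact dist_eq_zero.1 h.symm
  · simp only [extendByGeodesics, if_neg (by linarith : ¬ b + dist (σ b) y ≤ a),
      if_neg (by linarith : ¬ b + dist (σ b) y < b), add_sub_cancel_left, hg₂.2.1]

theorem IsQuasiGeodesicOn.exists_extension (hX : IsGeodesicSpace X) {lam eps m : ℝ}
    (hσ : IsQuasiGeodesicOn lam eps a b σ) (hab : a ≤ b) (hlam : 1 ≤ lam)
    (hx : dist x (σ a) ≤ m) (hy : dist (σ b) y ≤ m) :
    ∃ τ : ℝ → X, ∃ a' b', IsQuasiGeodesicOn lam (eps + 4 * m) a' b' τ ∧ a' ≤ a ∧ b ≤ b' ∧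
      τ a' = x ∧ τ b' = y ∧ EqOn τ σ (Icc a b) := by
  obtain ⟨g₁, hg₁⟩ := hX x (σ a)
  obtain ⟨g₂, hg₂⟩ := hX (σ b) y
  refine ⟨_, _, _, hσ.of_near_projIcc hab hlam fun r hr => ?_,
    by linarith [dist_nonneg (x := x) (y := σ a)], by linarith [dist_nonneg (x := σ b) (y := y)],
    extendByGeodesics_left hg₁,
    extendByGeodesics_right hab hg₁ hg₂, eqOn_extendByGeodesics hg₁ hg₂⟩
  rw [dist_extendByGeodesics_projIcc hab hg₁ hg₂ hr]
  have : |r - projIcc a b hab r| ≤ m := by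
    rcases le_total r a with hra | hra
    · rw [projIcc_of_le_left hab hra, abs_of_nonpos (by linarith)]; linarith [hr.1]
    rcases le_total b r with hbr | hrb
    · rw [projIcc_of_right_le hab hbr, abs_of_nonneg (by linarith)]; linarith [hr.2]
    · rw [projIcc_of_mem hab ⟨hra, hrb⟩, sub_self, abs_zero]; exact dist_nonneg.trans hx
  exact ⟨this, this⟩

end Extension

theorem IsMorseSet.infDist_le_of_dist_endpoints_le {X : Type*} [MetricSpace X]
    (hX : IsGeodesicSpace X) {N : ℝ → ℝ → ℝ} {A : Set X} (hA : IsMorseSet N A) {σ : ℝ → X}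
    {lam eps a b m : ℝ} (hσ : IsQuasiGeodesicOn lam eps a b σ) (hab : a ≤ b) (hlam : 1 ≤ lam)
    (heps : 0 ≤ eps) {x y : X} (hxA : x ∈ A) (hyA : y ∈ A) (hx : dist x (σ a) ≤ m)
    (hy : dist (σ b) y ≤ m) {s : ℝ} (hs : s ∈ Icc a b) :
    infDist (σ s) A ≤ N lam (eps + 4 * m) := by
  obtain ⟨τ, a', b', hτ, ha', hb', hτa, hτb, hτσ⟩ := hσ.exists_extension hX hab hlam hx hy
  have hm : 0 ≤ m := dist_nonneg.trans hx
  rw [← hτσ hs]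
  exact hA lam _ a' b' τ hlam (by positivity) (by linarith [hs.1, hs.2]) hτ (hτa ▸ hxA)
    (hτb ▸ hyA) s ⟨by linarith [hs.1], by linarith [hs.2]⟩

/-- `m` bounds the distance from the segment to the ray, and `K` that from the ray of a
quasi-geodesic with endpoints on the segment once it is extended to the ray. -/
def uniformMorseGauge (N : ℝ → ℝ → ℝ) (D lam eps : ℝ) : ℝ :=
  let m := N 1 (4 * D)
  let K := N lam (eps + 4 * m)
  max (N lam eps) (K + IsGeodesicRay.excursionBound lam (eps + 4 * m) K + 4 * m + 5 * D + 1)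

section SegmentToRay

variable {X : Type*} [MetricSpace X] {N : ℝ → ℝ → ℝ} {α : ℝ → X} {p' : X} {D T : ℝ}
  {γ : ℝ → X}

theorem exists_dist_ray_le_of_segment [ProperSpace X] (hX : IsGeodesicSpace X)
    (hα : IsGeodesicRay α) (hA : IsMorseSet N (α '' Ici 0)) (hT : 0 ≤ T) (hp' : dist (α 0) p' ≤ D)
    (hγ : IsGeodesicSegment γ p' (α T)) {s : ℝ} (hs : s ∈ Icc 0 (dist p' (α T))) :
    ∃ v, 0 ≤ v ∧ dist (γ s) (α v) ≤ N 1 (4 * D) := by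
  have hD : 0 ≤ D := dist_nonneg.trans hp'
  refine hα.exists_dist_le_of_infDist_le ?_
  simpa using hA.infDist_le_of_dist_endpoints_le hX hγ.isQuasiGeodesicOn dist_nonneg le_rfl
    le_rfl ⟨0, self_mem_Ici, rfl⟩ ⟨T, hT, rfl⟩ (by rwa [hγ.1]) (by rwa [hγ.2.1, dist_self]) hs

theorem ray_param_le_of_dist_segment_le (hα : IsGeodesicRay α) (hT : 0 ≤ T)
    (hp' : dist (α 0) p' ≤ D) (hγ : IsGeodesicSegment γ p' (α T)) {s u m : ℝ}
    (hs : s ∈ Icc 0 (dist p' (α T))) (hu : 0 ≤ u) (hsu : dist (γ s) (α u) ≤ m) :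
    u ≤ T + 2 * D + m := by
  have h0u : dist (α 0) (α u) = u := by simp [hα.dist_eq le_rfl hu, abs_of_nonneg hu]
  have h0T : dist (α 0) (α T) = T := by simp [hα.dist_eq le_rfl hT, abs_of_nonneg hT]
  linarith [dist_triangle4 (α 0) p' (γ s) (α u), hγ.dist_left hs, hs.2,
    dist_triangle_left p' (α T) (α 0)]

theorem infDist_ray_segment_le [ProperSpace X] (hX : IsGeodesicSpace X) (hN : IsMorseGauge N)
    (hα : IsGeodesicRay α) (hA : IsMorseSet N (α '' Ici 0)) (hT : 0 ≤ T)
    (hp' : dist (α 0) p' ≤ D) (hγ : IsGeodesicSegment γ p' (α T)) {u c : ℝ} (hu : 0 ≤ u)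
    (hc : 0 ≤ c) (huT : u ≤ T + c) :
    infDist (α u) (γ '' Icc 0 (dist p' (α T))) ≤ 3 * (N 1 (4 * D) + D) + 1 + c := by
  have hD : 0 ≤ D := dist_nonneg.trans hp'
  have hm : 0 ≤ N 1 (4 * D) := hN 1 _ le_rfl (by positivity)
  rcases le_total u T with huT | hTu
  · have := hα.infDist_segment_le_of_near hγ (K := N 1 (4 * D) + D)
      (fun s hs => (exists_dist_ray_le_of_segment hX hα hA hT hp' hγ hs).imp fun v ⟨hv, hsv⟩ =>
        ⟨hv, by linarith⟩)
      le_rfl (by rw [dist_comm]; linarith) hT (by rw [dist_self]; positivity)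
      (uIcc_of_le hT ▸ ⟨hu, huT⟩ : u ∈ uIcc 0 T)
    linarith
  · calc infDist (α u) (γ '' Icc 0 (dist p' (α T))) ≤ dist (α u) (α T) :=
          infDist_le_dist_of_mem ⟨_, right_mem_Icc.2 dist_nonneg, hγ.2.1⟩
      _ ≤ 3 * (N 1 (4 * D) + D) + 1 + c := by
        rw [hα.dist_eq hu hT, abs_of_nonneg (by linarith)]; linarith

end SegmentToRay

theorem isMorseSet_segment_to_ray {X : Type*} [MetricSpace X] [ProperSpace X]
    (hX : IsGeodesicSpace X) {N : ℝ → ℝ → ℝ} (hN : IsMorseGauge N) {α : ℝ → X}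
    (hα : IsGeodesicRay α) (hA : IsMorseSet N (α '' Ici 0)) {p' : X} {D T : ℝ} (hT : 0 ≤ T)
    (hp' : dist (α 0) p' ≤ D) {γ : ℝ → X} (hγ : IsGeodesicSegment γ p' (α T)) :
    IsMorseSet (uniformMorseGauge N D) (γ '' Icc 0 (dist p' (α T))) := by
  intro lam eps a b σ hlam heps hab hσ ⟨sa, hsa, hσa⟩ ⟨sb, hsb, hσb⟩ s hs
  have hD : 0 ≤ D := dist_nonneg.trans hp'
  set m := N 1 (4 * D)
  set K := N lam (eps + 4 * m)
  have hm : 0 ≤ m := hN 1 _ le_rfl (by positivity)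
  have hK : 0 ≤ K := hN lam _ hlam (by positivity)
  obtain ⟨u₁, hu₁, hau₁⟩ := exists_dist_ray_le_of_segment hX hα hA hT hp' hγ hsa
  obtain ⟨u₂, hu₂, hbu₂⟩ := exists_dist_ray_le_of_segment hX hα hA hT hp' hγ hsb
  obtain ⟨τ, a', b', hτ, ha', hb', hτa, hτb, hτσ⟩ := hσ.exists_extension hX hab hlam
    (m := m) (x := α u₁) (y := α u₂) (by rwa [dist_comm, ← hσa]) (by rwa [← hσb])
  have hτnear (r : ℝ) (hr : r ∈ Icc a' b') : ∃ v, 0 ≤ v ∧ dist (τ r) (α v) ≤ K :=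
    hα.exists_dist_le_of_infDist_le <| hA lam _ a' b' τ hlam (by positivity)
      (by linarith) hτ (hτa ▸ mem_image_of_mem _ hu₁) (hτb ▸ mem_image_of_mem _ hu₂) r hr
  have hs' : s ∈ Icc a' b' := ⟨by linarith [hs.1], by linarith [hs.2]⟩
  obtain ⟨u, hu, hsu⟩ := hτnear s hs'
  have hu_le := hα.le_max_add_excursionBound (by linarith) (by positivity) hτ hτnear hu₁ hτa
    hu₂ hτb hs' hu hsu
  rw [hτσ hs] at hsu
  set B := IsGeodesicRay.excursionBound lam (eps + 4 * m) K
  have hB : 0 ≤ B := by unfold B IsGeodesicRay.excursionBound; positivity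
  have hu₁T := ray_param_le_of_dist_segment_le hα hT hp' hγ hsa hu₁ hau₁
  have hu₂T := ray_param_le_of_dist_segment_le hα hT hp' hγ hsb hu₂ hbu₂
  have hαu := infDist_ray_segment_le hX hN hα hA hT hp' hγ hu (c := 2 * D + m + B) (by positivity)
    (by linarith [max_le hu₁T hu₂T])
  calc infDist (σ s) (γ '' Icc 0 (dist p' (α T)))
      ≤ infDist (α u) (γ '' Icc 0 (dist p' (α T))) + dist (σ s) (α u) :=
        infDist_le_infDist_add_dist
    _ ≤ K + B + 4 * m + 5 * D + 1 := by linarith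
    _ ≤ uniformMorseGauge N D lam eps := le_max_right _ _

theorem geodesics_to_morse_ray_uniformly_morse_general (N : ℝ → ℝ → ℝ) (hN : IsMorseGauge N)
    (D : ℝ) :
    ∃ N' : ℝ → ℝ → ℝ, IsMorseGauge N' ∧ (∀ lam eps : ℝ, N lam eps ≤ N' lam eps) ∧
      ∀ (X : Type) (_ : MetricSpace X) (_ : ProperSpace X), IsGeodesicSpace X →
        ∀ (α : ℝ → X) (p p' : X), IsGeodesicRay α → IsMorseSet N (α '' Set.Ici (0 : ℝ)) →
          α 0 = p → dist p p' ≤ D →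
          ∀ (q : X), q ∈ α '' Set.Ici (0 : ℝ) →
            ∀ γ : ℝ → X, IsGeodesicSegment γ p' q →
              IsMorseSet N' (γ '' Set.Icc (0 : ℝ) (dist p' q)) := by
  refine ⟨uniformMorseGauge N D, fun lam eps hlam heps => (hN lam eps hlam heps).trans
    (le_max_left _ _), fun lam eps => le_max_left _ _, ?_⟩
  rintro X _ _ hX α p p' hα hA rfl hp' q ⟨T, hT, rfl⟩ γ hγ
  exact isMorseSet_segment_to_ray hX hN hα hA hT hp' hγ

/-- geodesics from a nearby point to an `N`-Morse ray are uniformly `N'`-Morse,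
where `N'` depends only on `N` and the distance bound `D`. -/
theorem geodesics_to_morse_ray_uniformly_morse (N : ℝ → ℝ → ℝ) (hN : IsMorseGauge N)
    (D : ℝ) (hD : 0 ≤ D) :
    ∃ N' : ℝ → ℝ → ℝ, IsMorseGauge N' ∧ (∀ lam eps : ℝ, N lam eps ≤ N' lam eps) ∧
      ∀ (X : Type) (_ : MetricSpace X) (_ : ProperSpace X), IsGeodesicSpace X →
        ∀ (α : ℝ → X) (p p' : X), IsGeodesicRay α → IsMorseSet N (α '' Set.Ici (0 : ℝ)) →
          α 0 = p → dist p p' ≤ D →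
          ∀ (q : X), q ∈ α '' Set.Ici (0 : ℝ) →
            ∀ γ : ℝ → X, IsGeodesicSegment γ p' q →
              IsMorseSet N' (γ '' Set.Icc (0 : ℝ) (dist p' q)) :=
  geodesics_to_morse_ray_uniformly_morse_general N hN D
end

section
/- A distance-like function attains its minimum on spheres: let X be a proper metric space, h : X → ℝ a distance-like function, x₀ ∈ X and r > 0. Then there exists y ∈ X with d(x₀, y) = r and h(y) = h(x₀) − r, and moreover every w ∈ X with d(x₀, w) = r satisfies h(w) ≥ h(x₀) − r; that is, the minimum of h on the sphere of radius r about x₀ is attained and equals h(x₀) − r. -/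
/-- a distance-like function on a proper metric space attains the minimum value
`h x₀ - r` on the sphere of radius `r > 0` about `x₀`. -/
theorem distanceLike_min_on_sphere {X : Type*} [MetricSpace X] [ProperSpace X]
    (h : X → ℝ) (hh : DistanceLike h) (x₀ : X) (r : ℝ) (hr : 0 < r) :
    (∃ y : X, dist x₀ y = r ∧ h y = h x₀ - r) ∧
      ∀ w : X, dist x₀ w = r → h x₀ - r ≤ h w := by
  obtain ⟨hcont, hprop⟩ := hh
  constructor
  · have hle : h x₀ - r ≤ h x₀ := by linarith
    obtain ⟨hne, heq⟩ := hprop x₀ (h x₀ - r) hle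
    have hinf : Metric.infDist x₀ (h ⁻¹' {h x₀ - r}) = r := by linarith
    have hclosed : IsClosed (h ⁻¹' {h x₀ - r}) := isClosed_singleton.preimage hcont
    obtain ⟨y, hy, hdy⟩ := hclosed.exists_infDist_eq_dist hne x₀
    exact ⟨y, by rw [← hdy, hinf], hy⟩
  · intro w hw
    by_contra hlt
    push_neg at hlt
    have hle : h w ≤ h x₀ := by linarith
    obtain ⟨hne, heq⟩ := hprop x₀ (h w) hle
    have hmem : w ∈ h ⁻¹' {h w} := rfl
    have := Metric.infDist_le_dist_of_mem (x := x₀) hmem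
    rw [hw] at this
    linarith
end
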